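/- arXiv:2410.05732 — 2 statements merged into one kernel-verified Lean document; each statement's English description precedes it below -/
import Mathlib

section
/- Let L : (0,∞) → (0,∞) be slowly varying at 0, let f : (0,∞) → (0,∞) be continuous with f(t) ~ t^{ρ-1} L(t) as t → 0 for some ρ > 0, and suppose the Laplace transform ℒ(f)(u) = ∫₀^∞ f(t) e^{-ut} dt exists for all u > 0. Then ℒ(f)(u) ~ Γ(ρ) u^{-ρ} L(1/u) as u → ∞. -/
open MeasureTheory Filter


lemma uct_step (h : ℝ → ℝ) (hc : Continuous h)
    (hh : ∀ c : ℝ, Tendsto (fun x => h (x + c) - h x) atTop (nhds 0))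
    {ε : ℝ} (hε : 0 < ε) :
    ∃ δ > 0, ∃ X : ℝ, ∀ x, X ≤ x → ∀ c ∈ Set.Icc 0 δ, |h (x + c) - h x| ≤ ε := by
  set S := Set.Icc (1:ℝ) 2 with hS
  haveI : CompleteSpace S := isClosed_Icc.completeSpace_coe
  haveI : Nonempty S := ⟨⟨1, by norm_num, by norm_num⟩⟩
  set E : ℕ → Set S := fun n => {c : S | ∀ x : ℝ, (n:ℝ) ≤ x → |h (x + c.1) - h x| ≤ ε/2}
    with hE
  have hclosed : ∀ n, IsClosed (E n) := by
    intro n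
    have : E n = ⋂ (x : ℝ) (_ : (n:ℝ) ≤ x), {c : S | |h (x + c.1) - h x| ≤ ε/2} := by
      ext c; simp [hE]
    rw [this]
    refine isClosed_iInter fun x => isClosed_iInter fun _ => ?_
    exact isClosed_le (((hc.comp (continuous_const.add continuous_subtype_val)).sub
      continuous_const).abs) continuous_const
  have hunion : ⋃ n, E n = Set.univ := by
    ext c
    simp only [Set.mem_iUnion, Set.mem_univ, iff_true]
    have hev : ∀ᶠ x in atTop, |h (x + c.1) - h x| ≤ ε/2 := by
      have := ((hh c.1).abs).eventually_le_const (show |(0:ℝ)| < ε/2 by simpa using half_pos hε)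
      simpa using this
    obtain ⟨X, hX⟩ := eventually_atTop.mp hev
    obtain ⟨n, hn⟩ := exists_nat_ge X
    exact ⟨n, fun x hx => hX x (le_trans hn hx)⟩
  obtain ⟨n, c₀, hc₀⟩ := nonempty_interior_of_iUnion_of_closed hclosed hunion
  rw [mem_interior_iff_mem_nhds, Metric.mem_nhds_iff] at hc₀
  obtain ⟨r, hr, hball⟩ := hc₀
  -- membership helper
  have hmem : ∀ v : ℝ, ∀ hv : v ∈ S, |v - c₀.1| < r →
      ∀ x : ℝ, (n:ℝ) ≤ x → |h (x + v) - h x| ≤ ε/2 := by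
    intro v hv hvr x hx
    have : (⟨v, hv⟩ : S) ∈ Metric.ball c₀ r := by
      simp only [Metric.mem_ball, Subtype.dist_eq, Real.dist_eq]
      exact hvr
    exact hball this x hx
  set δ := min (r/2) (1/2) with hδdef
  have hδ : 0 < δ := lt_min (by linarith) (by norm_num)
  have hc₀S : c₀.1 ∈ S := c₀.2
  obtain ⟨hc₁, hc₂⟩ := hc₀S
  set a : ℝ := if c₀.1 ≤ 3/2 then c₀.1 else c₀.1 - δ with ha
  have hδ1 : δ ≤ r/2 := min_le_left _ _
  have hδ2 : δ ≤ 1/2 := min_le_right _ _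
  have key : ∀ c' ∈ Set.Icc (0:ℝ) δ, ∀ x : ℝ, (n:ℝ) ≤ x → |h (x + (a + c')) - h x| ≤ ε/2 := by
    intro c' hc' x hx
    obtain ⟨hc'0, hc'δ⟩ := hc'
    by_cases hcase : c₀.1 ≤ 3/2
    · have haeq : a = c₀.1 := if_pos hcase
      refine hmem (a + c') ⟨by rw [haeq]; linarith, by rw [haeq]; linarith⟩ ?_ x hx
      rw [haeq]; rw [abs_of_nonneg (by linarith)]; linarith
    · push_neg at hcase
      have haeq : a = c₀.1 - δ := if_neg (not_le.mpr hcase)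
      refine hmem (a + c') ⟨by rw [haeq]; linarith, by rw [haeq]; linarith⟩ ?_ x hx
      rw [haeq]
      have : |c₀.1 - δ + c' - c₀.1| = |c' - δ| := by ring_nf
      rw [show c₀.1 - δ + c' - c₀.1 = c' - δ by ring, abs_of_nonpos (by linarith)]
      linarith
  refine ⟨δ, hδ, n, fun x hx c hc => ?_⟩
  have e1 := key c hc x hx
  have e2 := key 0 ⟨le_refl 0, hδ.le⟩ (x + c) (by linarith [hc.1])
  rw [show x + c + (a + 0) = x + (a + c) by ring] at e2
  rw [show h (x + c) - h x = (h (x + (a + c)) - h x) - (h (x + (a + c)) - h (x + c)) by ring]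
  calc |(h (x + (a + c)) - h x) - (h (x + (a + c)) - h (x + c))|
      ≤ |h (x + (a + c)) - h x| + |h (x + (a + c)) - h (x + c)| := abs_sub _ _
    _ ≤ ε/2 + ε/2 := add_le_add e1 e2
    _ = ε := by ring

lemma uct (h : ℝ → ℝ) (hc : Continuous h)
    (hh : ∀ c : ℝ, Tendsto (fun x => h (x + c) - h x) atTop (nhds 0))
    {ε : ℝ} (hε : 0 < ε) :
    ∀ᶠ x in atTop, ∀ c ∈ Set.Icc (0:ℝ) 1, |h (x + c) - h x| ≤ ε := by
  obtain ⟨δ, hδ, X₀, hstep⟩ := uct_step h hc hh (half_pos hε)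
  set N := ⌊1/δ⌋₊ with hN
  have hgrid : ∀ᶠ x in atTop, ∀ i ∈ Finset.range (N+1), |h (x + i*δ) - h x| ≤ ε/2 := by
    rw [Filter.eventually_all_finset]
    intro i _
    have := ((hh (i*δ)).abs).eventually_le_const (show |(0:ℝ)| < ε/2 by simpa using half_pos hε)
    simpa using this
  filter_upwards [eventually_ge_atTop X₀, hgrid] with x hx hg c hc
  obtain ⟨hc0, hc1⟩ := hc
  set i := ⌊c/δ⌋₊ with hi
  have hid : (i:ℝ) ≤ c/δ := Nat.floor_le (div_nonneg hc0 hδ.le)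
  have hi1 : (i:ℝ)*δ ≤ c := by
    rw [← le_div_iff₀ hδ]; exact hid
  have hi2 : c - i*δ ≤ δ := by
    have := Nat.lt_floor_add_one (c/δ)
    have : c < ((i:ℝ)+1)*δ := by
      rw [← div_lt_iff₀ hδ]; exact_mod_cast Nat.lt_floor_add_one (c/δ)
    linarith
  have hiN : i ∈ Finset.range (N+1) := by
    rw [Finset.mem_range, Nat.lt_succ_iff]
    exact Nat.floor_le_floor (by gcongr)
  have hiδ : (0:ℝ) ≤ (i:ℝ)*δ := by positivity
  have e1 := hstep (x + i*δ) (by linarith) (c - i*δ) ⟨by linarith, hi2⟩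
  have e2 := hg i hiN
  rw [show x + i*δ + (c - i*δ) = x + c by ring] at e1
  calc |h (x + c) - h x| = |(h (x + c) - h (x + i*δ)) + (h (x + i*δ) - h x)| := by ring_nf
    _ ≤ |h (x + c) - h (x + i*δ)| + |h (x + i*δ) - h x| := abs_add_le _ _
    _ ≤ ε/2 + ε/2 := add_le_add e1 e2
    _ = ε := by ring

lemma chain (h : ℝ → ℝ) (hc : Continuous h)
    (hh : ∀ c : ℝ, Tendsto (fun x => h (x + c) - h x) atTop (nhds 0))
    {ε : ℝ} (hε : 0 < ε) :
    ∃ X : ℝ, ∀ x y : ℝ, X ≤ x → x ≤ y → |h y - h x| ≤ ε * (y - x) + ε := by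
  obtain ⟨X, hX⟩ := eventually_atTop.mp (uct h hc hh hε)
  have key : ∀ n : ℕ, ∀ x, X ≤ x → ∀ y, x ≤ y → y ≤ x + (n+1) → |h y - h x| ≤ ε * (n+1) := by
    intro n
    induction n with
    | zero =>
      intro x hx y hxy hle
      have := hX x hx (y - x) ⟨by linarith, by push_cast at hle; linarith⟩
      rw [show x + (y - x) = y by ring] at this
      push_cast; linarith
    | succ n ih =>
      intro x hx y hxy hle
      by_cases hy : y ≤ x + (n+1)
      · have := ih x hx y hxy hy
        push_cast at this ⊢; nlinarith
      · push_neg at hy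
        have h1 : |h (x+1) - h x| ≤ ε := by
          have := hX x hx 1 ⟨zero_le_one, le_refl 1⟩; exact this
        have h2 := ih (x+1) (by linarith) y (by push_cast at hy; linarith)
          (by push_cast at hle ⊢; linarith)
        calc |h y - h x| = |(h y - h (x+1)) + (h (x+1) - h x)| := by ring_nf
          _ ≤ |h y - h (x+1)| + |h (x+1) - h x| := abs_add_le _ _
          _ ≤ ε * (n+1) + ε := add_le_add h2 h1
          _ = ε * (n+1+1) := by ring
          _ = _ := by push_cast; ring
  refine ⟨X, fun x y hx hxy => ?_⟩
  set n := ⌊y - x⌋₊ with hn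
  have h1 : y ≤ x + (n+1) := by
    have := Nat.lt_floor_add_one (y - x)
    push_cast; linarith
  have h2 : (n:ℝ) ≤ y - x := Nat.floor_le (by linarith)
  have := key n x hx y hxy h1
  nlinarith

set_option maxHeartbeats 1600000 in
/-- Abelian theorem: if `L` is slowly varying at `0`, `f` is continuous and positive on `(0,∞)`
with `f(t) ~ t^{ρ-1} L(t)` as `t → 0⁺` for some `ρ > 0`, and the Laplace transform
`ℒ(f)(u) = ∫₀^∞ f(t) e^{-ut} dt` exists for all `u > 0`, then
`ℒ(f)(u) ~ Γ(ρ) u^{-ρ} L(1/u)` as `u → ∞`. -/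
theorem stmt_2 (L f : ℝ → ℝ) (ρ : ℝ) (hρ : 0 < ρ)
    (hLpos : ∀ x : ℝ, 0 < x → 0 < L x)
    (hfpos : ∀ t : ℝ, 0 < t → 0 < f t)
    (hslow : ∀ c : ℝ, 0 < c →
      Tendsto (fun x => L (c * x) / L x) (nhdsWithin 0 (Set.Ioi 0)) (nhds 1))
    (hfc : ContinuousOn f (Set.Ioi 0))
    (hasym : Tendsto (fun t => f t / (t ^ (ρ - 1) * L t)) (nhdsWithin 0 (Set.Ioi 0)) (nhds 1))
    (hlap : ∀ u : ℝ, 0 < u →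
      IntegrableOn (fun t => f t * Real.exp (-(u * t))) (Set.Ioi 0)) :
    Tendsto (fun u : ℝ =>
        (∫ t in Set.Ioi (0 : ℝ), f t * Real.exp (-(u * t))) /
          (Real.Gamma ρ * u ^ (-ρ) * L (1 / u)))
      atTop (nhds 1) := by
  -- the continuous slowly varying modification g
  set g : ℝ → ℝ := fun t => f t * t ^ (1 - ρ) with hg
  have hgpos : ∀ t : ℝ, 0 < t → 0 < g t := fun t ht =>
    mul_pos (hfpos t ht) (Real.rpow_pos_of_pos ht _)
  have hfg : ∀ t : ℝ, 0 < t → f t = t ^ (ρ - 1) * g t := by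
    intro t ht
    rw [hg]; dsimp only
    rw [mul_comm (f t), ← mul_assoc, ← Real.rpow_add ht]
    norm_num
  have hgc : ContinuousOn g (Set.Ioi 0) :=
    hfc.mul (ContinuousOn.rpow_const continuousOn_id (fun x hx => Or.inl (ne_of_gt hx)))
  -- g/L → 1 at 0+
  have hgL : Tendsto (fun x => g x / L x) (nhdsWithin 0 (Set.Ioi 0)) (nhds 1) := by
    refine hasym.congr' ?_
    filter_upwards [self_mem_nhdsWithin] with x (hx : 0 < x)
    rw [hg]; dsimp only
    rw [div_mul_eq_div_div, div_eq_mul_inv (f x), ← Real.rpow_neg hx.le]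
    norm_num
  have hLg : Tendsto (fun x => L x / g x) (nhdsWithin 0 (Set.Ioi 0)) (nhds 1) := by
    have := hgL.inv₀ one_ne_zero
    simp only [inv_div, inv_one] at this
    exact this
  -- g is slowly varying at 0+
  have hmul : ∀ c : ℝ, 0 < c → Tendsto (fun x : ℝ => c * x)
      (nhdsWithin 0 (Set.Ioi 0)) (nhdsWithin 0 (Set.Ioi 0)) := by
    intro c hc
    apply tendsto_nhdsWithin_of_tendsto_nhds_of_eventually_within
    · have : Tendsto (fun x : ℝ => c * x) (nhds 0) (nhds (c * 0)) :=
        (continuous_const.mul continuous_id).tendsto 0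
      rw [mul_zero] at this
      exact this.mono_left nhdsWithin_le_nhds
    · filter_upwards [self_mem_nhdsWithin] with x (hx : 0 < x)
      exact Set.mem_Ioi.mpr (mul_pos hc hx)
  have hgs : ∀ c : ℝ, 0 < c → Tendsto (fun x => g (c * x) / g x)
      (nhdsWithin 0 (Set.Ioi 0)) (nhds 1) := by
    intro c hc
    have h1 : Tendsto (fun x => g (c*x) / L (c*x) * (L (c*x) / L x) * (L x / g x))
        (nhdsWithin 0 (Set.Ioi 0)) (nhds (1 * 1 * 1)) :=
      ((hgL.comp (hmul c hc)).mul (hslow c hc)).mul hLg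
    rw [one_mul, one_mul] at h1
    refine h1.congr' ?_
    filter_upwards [self_mem_nhdsWithin] with x (hx : 0 < x)
    have h2 : L (c*x) ≠ 0 := (hLpos _ (mul_pos hc hx)).ne'
    have h3 : L x ≠ 0 := (hLpos _ hx).ne'
    field_simp
  -- log-scale function
  set h : ℝ → ℝ := fun x => Real.log (g (Real.exp (-x))) with hh
  have hhc : Continuous h := by
    refine continuous_iff_continuousAt.mpr fun x => ?_
    have hexpc : ContinuousAt (fun x : ℝ => Real.exp (-x)) x :=
      (Real.continuous_exp.comp continuous_neg).continuousAt
    have h1 : ContinuousAt (fun x : ℝ => g (Real.exp (-x))) x :=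
      ContinuousAt.comp (f := fun x : ℝ => Real.exp (-x))
        (hgc.continuousAt (isOpen_Ioi.mem_nhds (Real.exp_pos (-x)))) hexpc
    exact h1.log (hgpos (Real.exp (-x)) (Real.exp_pos (-x))).ne' 
  have hexp0 : Tendsto (fun x : ℝ => Real.exp (-x)) atTop
      (nhdsWithin 0 (Set.Ioi 0)) := by
    apply tendsto_nhdsWithin_of_tendsto_nhds_of_eventually_within
    · exact Real.tendsto_exp_atBot.comp tendsto_neg_atTop_atBot
    · exact Eventually.of_forall fun x => Set.mem_Ioi.mpr (Real.exp_pos _)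
  have hhlim : ∀ c : ℝ, Tendsto (fun x => h (x + c) - h x) atTop (nhds 0) := by
    intro c
    have h1 : Tendsto (fun x : ℝ => g (Real.exp (-c) * Real.exp (-x)) / g (Real.exp (-x)))
        atTop (nhds 1) := (hgs _ (Real.exp_pos (-c))).comp hexp0
    have h2 : Tendsto (fun x : ℝ => Real.log
        (g (Real.exp (-c) * Real.exp (-x)) / g (Real.exp (-x)))) atTop (nhds 0) := by
      have := ((Real.continuousAt_log one_ne_zero).tendsto).comp h1
      rwa [Real.log_one] at this
    refine h2.congr ?_
    intro x
    rw [hh]; dsimp only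
    rw [← Real.exp_add, ← neg_add, add_comm c x,
      Real.log_div (hgpos _ (Real.exp_pos _)).ne' (hgpos _ (Real.exp_pos _)).ne']
  -- Potter bounds
  set ε : ℝ := min ρ 1 / 2 with hε
  have hεpos : 0 < ε := by
    rw [hε]
    have : (0:ℝ) < min ρ 1 := lt_min hρ one_pos
    linarith
  have hερ : ε < ρ := by
    rw [hε]
    have h1 : min ρ 1 ≤ ρ := min_le_left _ _
    linarith
  obtain ⟨X, hX⟩ := chain h hhc hhlim hεpos
  set X₀ : ℝ := Real.exp (-X) with hX₀def
  have hX₀pos : 0 < X₀ := Real.exp_pos _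
  have potter : ∀ a b : ℝ, 0 < a → 0 < b → a ≤ X₀ → b ≤ X₀ →
      g a / g b ≤ Real.exp ε * ((a/b) ^ ε + (b/a) ^ ε) := by
    have hval : ∀ s : ℝ, 0 < s → h (-Real.log s) = Real.log (g s) := by
      intro s hs
      rw [hh]; dsimp only; rw [neg_neg, Real.exp_log hs]
    have key : ∀ s t : ℝ, 0 < s → 0 < t → s ≤ X₀ → t ≤ X₀ →
        Real.log (g s) - Real.log (g t) ≤ ε * |Real.log (t/s)| + ε := by
      intro s t hs ht hsX htX
      rcases le_total s t with hst | hts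
      · have h1 : X ≤ -Real.log t := by
          have h2 := Real.log_le_log ht htX
          rw [hX₀def, Real.log_exp] at h2; linarith
        have h2 : -Real.log t ≤ -Real.log s := by
          have := Real.log_le_log hs hst; linarith
        have h3 := hX _ _ h1 h2
        rw [hval s hs, hval t ht] at h3
        have h4 := (abs_le.mp h3).2
        have h5 : -Real.log s - -Real.log t = Real.log (t/s) := by
          rw [Real.log_div ht.ne' hs.ne']; ring
        rw [h5] at h4
        have h6 : Real.log (t/s) ≤ |Real.log (t/s)| := le_abs_self _
        nlinarith [hεpos.le]
      · have h1 : X ≤ -Real.log s := by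
          have h2 := Real.log_le_log hs hsX
          rw [hX₀def, Real.log_exp] at h2; linarith
        have h2 : -Real.log s ≤ -Real.log t := by
          have := Real.log_le_log ht hts; linarith
        have h3 := hX _ _ h1 h2
        rw [hval s hs, hval t ht] at h3
        rw [abs_sub_comm] at h3
        have h4 := (abs_le.mp h3).2
        have h5 : -Real.log t - -Real.log s = Real.log (s/t) := by
          rw [Real.log_div hs.ne' ht.ne']; ring
        rw [h5] at h4
        have h6 : Real.log (s/t) ≤ |Real.log (s/t)| := le_abs_self _
        have h7 : |Real.log (s/t)| = |Real.log (t/s)| := by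
          rw [show (s/t : ℝ) = (t/s)⁻¹ by rw [inv_div], Real.log_inv, abs_neg]
        nlinarith [hεpos.le]
    intro a b ha hb haX hbX
    have h1 := key a b ha hb haX hbX
    have h2 : g a / g b = Real.exp (Real.log (g a) - Real.log (g b)) := by
      rw [Real.exp_sub, Real.exp_log (hgpos a ha), Real.exp_log (hgpos b hb)]
    rw [h2]
    have h3 := Real.exp_le_exp.mpr h1
    refine h3.trans ?_
    have expbound : ∀ c : ℝ, 0 < c → Real.exp (ε * Real.log c + ε) = Real.exp ε * c ^ ε := by
      intro c hc
      rw [Real.exp_add, Real.rpow_def_of_pos hc, mul_comm (Real.log c) ε, mul_comm]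
    rcases le_total a b with hab | hba
    · have hba1 : 1 ≤ b/a := (one_le_div ha).mpr hab
      rw [abs_of_nonneg (Real.log_nonneg hba1), expbound _ (div_pos hb ha)]
      have : (0:ℝ) ≤ (a/b) ^ ε := Real.rpow_nonneg (by positivity) _
      nlinarith [Real.exp_pos ε]
    · have hab1 : b/a ≤ 1 := (div_le_one ha).mpr hba
      have h8 : |Real.log (b/a)| = Real.log (a/b) := by
        rw [abs_of_nonpos (Real.log_nonpos (by positivity) hab1),
          show (a/b : ℝ) = (b/a)⁻¹ by rw [inv_div], Real.log_inv]
      rw [h8, expbound _ (div_pos ha hb)]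
      have : (0:ℝ) ≤ (b/a) ^ ε := Real.rpow_nonneg (by positivity) _
      nlinarith [Real.exp_pos ε]
  -- limit of 1/u into nhdsWithin 0 (Ioi 0)
  have hinv : Tendsto (fun u : ℝ => 1/u) atTop (nhdsWithin 0 (Set.Ioi 0)) := by
    apply tendsto_nhdsWithin_of_tendsto_nhds_of_eventually_within
    · simpa [one_div] using tendsto_inv_atTop_zero
    · filter_upwards [eventually_gt_atTop 0] with u hu
      exact Set.mem_Ioi.mpr (by positivity)
  -- dominating function
  set bound : ℝ → ℝ := fun s =>
    Real.exp ε * (s ^ ε + s ^ (-ε)) * (s ^ (ρ-1) * Real.exp (-s)) with hbound_def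
  have hbound_int : Integrable bound (volume.restrict (Set.Ioi 0)) := by
    have i1 := Real.GammaIntegral_convergent (show 0 < ρ + ε by linarith)
    have i2 := Real.GammaIntegral_convergent (show 0 < ρ - ε by linarith)
    have i3 := (i1.add i2).const_mul (Real.exp ε)
    refine i3.congr ?_
    filter_upwards [ae_restrict_mem measurableSet_Ioi] with s hs
    have hs' : (0:ℝ) < s := hs
    simp only [Pi.add_apply, hbound_def]
    have e1 : s ^ (ρ + ε - 1) = s ^ ε * s ^ (ρ - 1) := by
      rw [← Real.rpow_add hs']; ring_nf
    have e2 : s ^ (ρ - ε - 1) = s ^ (-ε) * s ^ (ρ - 1) := by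
      rw [← Real.rpow_add hs']; ring_nf
    rw [e1, e2]; ring
  -- indicator family
  set F : ℝ → ℝ → ℝ := fun u => (Set.Ioc 0 (u * X₀)).indicator
    (fun s => g (s/u) / g (1/u) * (s ^ (ρ-1) * Real.exp (-s))) with hFdef
  have hFlim : Tendsto (fun u => ∫ s in Set.Ioi (0:ℝ), F u s) atTop
      (nhds (Real.Gamma ρ)) := by
    have hΓ : Real.Gamma ρ = ∫ s in Set.Ioi (0:ℝ), s ^ (ρ-1) * Real.exp (-s) := by
      rw [Real.Gamma_eq_integral hρ]
      exact setIntegral_congr_fun measurableSet_Ioi fun x _ => mul_comm _ _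
    rw [hΓ]
    refine tendsto_integral_filter_of_dominated_convergence bound ?_ ?_ hbound_int ?_
    · -- measurability
      filter_upwards [eventually_gt_atTop 0] with u hu
      have hcont : ContinuousOn (fun s => g (s/u) / g (1/u) * (s ^ (ρ-1) * Real.exp (-s)))
          (Set.Ioi 0) := by
        have c1 : ContinuousOn (fun s : ℝ => g (s / u)) (Set.Ioi 0) := by
          refine ContinuousOn.comp (f := fun s : ℝ => s / u) hgc
            (continuousOn_id.div_const u) ?_
          intro s hs
          exact Set.mem_Ioi.mpr (div_pos hs hu)
        have c2 : ContinuousOn (fun s : ℝ => s ^ (ρ-1)) (Set.Ioi 0) :=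
          ContinuousOn.rpow_const continuousOn_id fun x hx => Or.inl (ne_of_gt hx)
        have c3 : ContinuousOn (fun s : ℝ => Real.exp (-s)) (Set.Ioi 0) :=
          (Real.continuous_exp.comp continuous_neg).continuousOn
        exact (c1.div_const _).mul (c2.mul c3)
      exact (hcont.aestronglyMeasurable measurableSet_Ioi).indicator measurableSet_Ioc
    · -- domination
      filter_upwards [eventually_ge_atTop (max 1 (1/X₀))] with u hu
      have hu1 : (1:ℝ) ≤ u := le_trans (le_max_left _ _) hu
      have hu0 : (0:ℝ) < u := lt_of_lt_of_le one_pos hu1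
      have huX : 1/u ≤ X₀ := by
        rw [div_le_iff₀ hu0] at *
        have h1 : 1/X₀ ≤ u := le_trans (le_max_right _ _) hu
        rw [div_le_iff₀ hX₀pos] at h1
        nlinarith
      filter_upwards [ae_restrict_mem measurableSet_Ioi] with s hs
      have hs' : (0:ℝ) < s := hs
      have hbnd_nonneg : 0 ≤ bound s := by
        rw [hbound_def]; dsimp only
        have b1 : (0:ℝ) ≤ s ^ ε := Real.rpow_nonneg hs'.le _
        have b2 : (0:ℝ) ≤ s ^ (-ε) := Real.rpow_nonneg hs'.le _
        have b3 : (0:ℝ) ≤ s ^ (ρ-1) := Real.rpow_nonneg hs'.le _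
        positivity
      rw [hFdef]; dsimp only
      by_cases hmem : s ∈ Set.Ioc 0 (u * X₀)
      · rw [Set.indicator_of_mem hmem]
        have hsu : 0 < s / u := div_pos hs' hu0
        have h1u : 0 < 1/u := by positivity
        have hsuX : s / u ≤ X₀ := by
          rw [div_le_iff₀ hu0]
          calc s ≤ u * X₀ := hmem.2
            _ = X₀ * u := mul_comm _ _
        have hp := potter (s/u) (1/u) hsu h1u hsuX huX
        have e1 : (s/u) / (1/u) = s := by field_simp
        have e2 : (1/u) / (s/u) = s⁻¹ := by field_simp
        rw [e1, e2] at hp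
        have e3 : (s⁻¹ : ℝ) ^ ε = s ^ (-ε) := by
          rw [Real.rpow_neg hs'.le, Real.inv_rpow hs'.le]
        rw [e3] at hp
        have hK : (0:ℝ) ≤ s ^ (ρ-1) * Real.exp (-s) :=
          mul_nonneg (Real.rpow_nonneg hs'.le _) (Real.exp_pos _).le
        have hFnn : (0:ℝ) ≤ g (s/u) / g (1/u) * (s ^ (ρ-1) * Real.exp (-s)) :=
          mul_nonneg (div_nonneg (hgpos _ hsu).le (hgpos _ h1u).le) hK
        rw [Real.norm_eq_abs, abs_of_nonneg hFnn, hbound_def]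
        exact mul_le_mul_of_nonneg_right hp hK
      · rw [Set.indicator_of_notMem hmem]
        simpa using hbnd_nonneg
    · -- pointwise limit
      filter_upwards [ae_restrict_mem measurableSet_Ioi] with s hs
      have hs' : (0:ℝ) < s := hs
      have h1 : Tendsto (fun u : ℝ => g (s * (1/u)) / g (1/u)) atTop (nhds 1) :=
        (hgs s hs').comp hinv
      have h2 := h1.mul_const (s ^ (ρ-1) * Real.exp (-s))
      rw [one_mul] at h2
      refine h2.congr' ?_
      filter_upwards [eventually_gt_atTop (s / X₀), eventually_gt_atTop 0] with u huX hu0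
      have hmem : s ∈ Set.Ioc 0 (u * X₀) := by
        constructor
        · exact hs'
        · rw [div_lt_iff₀ hX₀pos] at huX
          linarith
      rw [hFdef]; dsimp only
      rw [Set.indicator_of_mem hmem, div_eq_mul_inv s u, one_div]
  -- change of variables link
  have hFeq : ∀ u : ℝ, 1 ≤ u → (∫ s in Set.Ioi (0:ℝ), F u s) =
      (u ^ ρ / g (1/u)) * ∫ t in Set.Ioc (0:ℝ) X₀, f t * Real.exp (-(u*t)) := by
    intro u hu1
    have hu0 : (0:ℝ) < u := lt_of_lt_of_le one_pos hu1
    set G : ℝ → ℝ := fun s => (Set.Ioc 0 (u * X₀)).indicator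
      (fun s => f (s/u) * Real.exp (-s)) s with hGdef
    have step1 : (∫ s in Set.Ioi (0:ℝ), F u s) =
        (u ^ (ρ-1) / g (1/u)) * ∫ s in Set.Ioi (0:ℝ), G s := by
      rw [← integral_const_mul]
      refine setIntegral_congr_fun measurableSet_Ioi ?_
      intro s hs
      have hs' : (0:ℝ) < s := hs
      rw [hFdef, hGdef]; dsimp only
      by_cases hmem : s ∈ Set.Ioc 0 (u * X₀)
      · rw [Set.indicator_of_mem hmem, Set.indicator_of_mem hmem]
        have hsu : 0 < s / u := div_pos hs' hu0
        rw [hfg (s/u) hsu]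
        have e1 : (s/u : ℝ) ^ (ρ-1) = s ^ (ρ-1) / u ^ (ρ-1) :=
          Real.div_rpow hs'.le hu0.le _
        rw [e1]
        have hne1 : (u:ℝ) ^ (ρ-1) ≠ 0 := (Real.rpow_pos_of_pos hu0 _).ne'
        have hne2 : g (1/u) ≠ 0 := (hgpos _ (by positivity)).ne'
        field_simp
      · rw [Set.indicator_of_notMem hmem, Set.indicator_of_notMem hmem, mul_zero]
    have step2 : (∫ t in Set.Ioc (0:ℝ) X₀, f t * Real.exp (-(u*t))) =
        u⁻¹ * ∫ s in Set.Ioi (0:ℝ), G s := by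
      have c0 : ∀ t ∈ Set.Ioi (0:ℝ), (Set.Ioc (0:ℝ) X₀).indicator
          (fun t => f t * Real.exp (-(u*t))) t = G (u * t) := by
        intro t ht
        have ht' : (0:ℝ) < t := ht
        rw [hGdef]; dsimp only
        by_cases hmem : t ∈ Set.Ioc 0 X₀
        · have hm2 : u * t ∈ Set.Ioc 0 (u * X₀) :=
            ⟨by positivity, by nlinarith [hmem.2]⟩
          rw [Set.indicator_of_mem hmem, Set.indicator_of_mem hm2,
            mul_div_cancel_left₀ t hu0.ne']
        · have hm2 : u * t ∉ Set.Ioc 0 (u * X₀) := by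
            intro hc
            refine hmem ⟨ht', ?_⟩
            have := hc.2
            nlinarith
          rw [Set.indicator_of_notMem hmem, Set.indicator_of_notMem hm2]
      calc (∫ t in Set.Ioc (0:ℝ) X₀, f t * Real.exp (-(u*t)))
          = ∫ t in Set.Ioi (0:ℝ), (Set.Ioc (0:ℝ) X₀).indicator
              (fun t => f t * Real.exp (-(u*t))) t := by
            rw [setIntegral_indicator measurableSet_Ioc,
              Set.inter_eq_self_of_subset_right Set.Ioc_subset_Ioi_self]
        _ = ∫ t in Set.Ioi (0:ℝ), G (u * t) := setIntegral_congr_fun measurableSet_Ioi c0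
        _ = u⁻¹ * ∫ s in Set.Ioi (0:ℝ), G s := by
            have hcv := integral_comp_mul_left_Ioi G 0 hu0
            rw [mul_zero] at hcv
            rw [hcv, smul_eq_mul]
    rw [step1, step2]
    have hne2 : g (1/u) ≠ 0 := (hgpos _ (by positivity)).ne'
    have e4 : u ^ ρ = u ^ (ρ-1) * u := by
      rw [← Real.rpow_add_one hu0.ne' (ρ-1)]; ring_nf
    rw [e4]
    field_simp
  -- tail estimate
  set K : ℝ := ∫ t in Set.Ioi X₀, f t * Real.exp (-t) with hKdef
  have hKint : IntegrableOn (fun t => f t * Real.exp (-t)) (Set.Ioi X₀) := by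
    have h1 := (hlap 1 one_pos).mono_set (Set.Ioi_subset_Ioi hX₀pos.le)
    simpa using h1
  have hKnn : 0 ≤ K :=
    setIntegral_nonneg measurableSet_Ioi fun t ht =>
      mul_nonneg (hfpos t (lt_trans hX₀pos ht)).le (Real.exp_pos _).le
  have hT : Tendsto (fun u => (u ^ ρ / g (1/u)) *
      ∫ t in Set.Ioi X₀, f t * Real.exp (-(u*t))) atTop (nhds 0) := by
    set C : ℝ := Real.exp ε * (X₀ ^ ε + 1) / g X₀ * (Real.exp X₀ * K) with hCdef
    have hB : Tendsto (fun u : ℝ => C * (u ^ (ρ+ε) * Real.exp (-X₀ * u))) atTop (nhds 0) := by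
      have h1 := (tendsto_rpow_mul_exp_neg_mul_atTop_nhds_zero (ρ+ε) X₀ hX₀pos).const_mul C
      rwa [mul_zero] at h1
    refine tendsto_of_tendsto_of_tendsto_of_le_of_le' tendsto_const_nhds hB ?_ ?_
    · filter_upwards [eventually_gt_atTop 0] with u hu0
      refine mul_nonneg (div_nonneg (Real.rpow_nonneg hu0.le _)
        (hgpos _ (by positivity)).le) ?_
      refine setIntegral_nonneg measurableSet_Ioi fun t ht => ?_
      exact mul_nonneg (hfpos t (lt_trans hX₀pos ht)).le (Real.exp_pos _).le
    · filter_upwards [eventually_ge_atTop (max 1 (1/X₀))] with u hu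
      have hu1 : (1:ℝ) ≤ u := le_trans (le_max_left _ _) hu
      have hu0 : (0:ℝ) < u := lt_of_lt_of_le one_pos hu1
      have huX : 1/u ≤ X₀ := by
        have h1 : 1/X₀ ≤ u := le_trans (le_max_right _ _) hu
        rw [div_le_iff₀ hX₀pos] at h1
        rw [div_le_iff₀ hu0]
        nlinarith
      have hgXpos := hgpos X₀ hX₀pos
      have hg1u := hgpos (1/u) (by positivity)
      have hurn : (0:ℝ) ≤ u ^ ρ := Real.rpow_nonneg hu0.le _
      -- (a)
      have ia : (∫ t in Set.Ioi X₀, f t * Real.exp (-(u*t))) ≤ Real.exp (X₀ - X₀*u) * K := by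
        have mono : ∀ t ∈ Set.Ioi X₀, f t * Real.exp (-(u*t)) ≤
            Real.exp (X₀ - X₀*u) * (f t * Real.exp (-t)) := by
          intro t ht
          have ht' : X₀ < t := ht
          have hft := hfpos t (lt_trans hX₀pos ht')
          have hexp : Real.exp (-(u*t)) ≤ Real.exp (X₀ - X₀*u) * Real.exp (-t) := by
            rw [← Real.exp_add]
            refine Real.exp_le_exp.mpr ?_
            nlinarith
          calc f t * Real.exp (-(u*t)) ≤ f t * (Real.exp (X₀ - X₀*u) * Real.exp (-t)) :=
                mul_le_mul_of_nonneg_left hexp hft.le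
            _ = Real.exp (X₀ - X₀*u) * (f t * Real.exp (-t)) := by ring
        calc (∫ t in Set.Ioi X₀, f t * Real.exp (-(u*t)))
            ≤ ∫ t in Set.Ioi X₀, Real.exp (X₀ - X₀*u) * (f t * Real.exp (-t)) :=
              setIntegral_mono_on
                ((hlap u hu0).mono_set (Set.Ioi_subset_Ioi hX₀pos.le))
                (hKint.const_mul _) measurableSet_Ioi mono
          _ = Real.exp (X₀ - X₀*u) * K := by rw [integral_const_mul]
      -- (b)
      have ib : u ^ ρ / g (1/u) ≤ u ^ ρ * (Real.exp ε * (X₀^ε + 1) * u ^ ε / g X₀) := by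
        have hp := potter X₀ (1/u) hX₀pos (by positivity) le_rfl huX
        have e1 : X₀ / (1/u) = X₀ * u := by field_simp
        rw [e1] at hp
        have e3 : ((1/u)/X₀ : ℝ) ^ ε ≤ 1 :=
          Real.rpow_le_one (by positivity) ((div_le_one hX₀pos).mpr huX) hεpos.le
        have e4 : (X₀ * u) ^ ε = X₀^ε * u^ε := Real.mul_rpow hX₀pos.le hu0.le
        have e5 : (1:ℝ) ≤ u ^ ε := Real.one_le_rpow hu1 hεpos.le
        have hp2 : g X₀ / g (1/u) ≤ Real.exp ε * (X₀^ε + 1) * u ^ ε := by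
          rw [e4] at hp
          have hh1 := Real.exp_pos ε
          have hh2 : (0:ℝ) ≤ X₀ ^ ε := Real.rpow_nonneg hX₀pos.le _
          nlinarith
        have e6 : g X₀ / g (1/u) / g X₀ = 1 / g (1/u) := by
          field_simp
        have ib0 : 1 / g (1/u) ≤ Real.exp ε * (X₀^ε + 1) * u^ε / g X₀ := by
          rw [← e6]
          exact (div_le_div_iff_of_pos_right hgXpos).mpr hp2
        rw [div_eq_mul_one_div]
        exact mul_le_mul_of_nonneg_left ib0 hurn
      have hexpKnn : (0:ℝ) ≤ Real.exp (X₀ - X₀*u) * K :=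
        mul_nonneg (Real.exp_pos _).le hKnn
      calc (u ^ ρ / g (1/u)) * ∫ t in Set.Ioi X₀, f t * Real.exp (-(u*t))
          ≤ (u ^ ρ / g (1/u)) * (Real.exp (X₀ - X₀*u) * K) :=
            mul_le_mul_of_nonneg_left ia (div_nonneg hurn hg1u.le)
        _ ≤ (u ^ ρ * (Real.exp ε * (X₀^ε + 1) * u ^ ε / g X₀)) *
            (Real.exp (X₀ - X₀*u) * K) :=
            mul_le_mul_of_nonneg_right ib hexpKnn
        _ = C * (u ^ (ρ+ε) * Real.exp (-X₀ * u)) := by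
            rw [hCdef, Real.rpow_add hu0,
              show X₀ - X₀*u = X₀ + -X₀*u by ring, Real.exp_add]
            field_simp
  -- splitting
  have hsplit : ∀ u : ℝ, 0 < u → (∫ t in Set.Ioi (0:ℝ), f t * Real.exp (-(u*t))) =
      (∫ t in Set.Ioc (0:ℝ) X₀, f t * Real.exp (-(u*t))) +
        ∫ t in Set.Ioi X₀, f t * Real.exp (-(u*t)) := by
    intro u hu
    rw [← setIntegral_union (Set.Ioc_disjoint_Ioi le_rfl) measurableSet_Ioi
      ((hlap u hu).mono_set Set.Ioc_subset_Ioi_self)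
      ((hlap u hu).mono_set (Set.Ioi_subset_Ioi hX₀pos.le)),
      Set.Ioc_union_Ioi_eq_Ioi hX₀pos.le]
  have hQT : Tendsto (fun u => (u ^ ρ / g (1/u)) *
      ∫ t in Set.Ioi (0:ℝ), f t * Real.exp (-(u*t))) atTop (nhds (Real.Gamma ρ)) := by
    have h1 := hFlim.add hT
    rw [add_zero] at h1
    refine h1.congr' ?_
    filter_upwards [eventually_ge_atTop 1] with u hu1
    have hu0 : (0:ℝ) < u := lt_of_lt_of_le one_pos hu1
    rw [hsplit u hu0, mul_add, hFeq u hu1]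
  -- final assembly
  have hgLinv : Tendsto (fun u : ℝ => g (1/u) / L (1/u)) atTop (nhds 1) := hgL.comp hinv
  have hΓpos : 0 < Real.Gamma ρ := Real.Gamma_pos_of_pos hρ
  have hfinal := (hQT.mul hgLinv).mul_const (Real.Gamma ρ)⁻¹
  rw [mul_one, mul_inv_cancel₀ hΓpos.ne'] at hfinal
  refine hfinal.congr' ?_
  filter_upwards [eventually_gt_atTop 0] with u hu0
  have hgp := hgpos (1/u) (by positivity)
  have hLp := hLpos (1/u) (by positivity)
  have hup : (0:ℝ) < u ^ ρ := Real.rpow_pos_of_pos hu0 _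
  rw [Real.rpow_neg hu0.le]
  field_simp
end

section
/- Let 0 < β < 1/2. Then for 0 < |u| < 1, the integral ∫_ℝ s^{β-1} (s+u)^{β-1} 1_{{0<s<1, 0<s+u<1}} ds is at most |u|^{2β-1} · ∫₀^∞ t^{β-1}(t+1)^{β-1} dt, and the latter integral is finite. -/
open MeasureTheory

lemma auxInt3 (β : ℝ) (hβ0 : 0 < β) (hβ1 : β < 1 / 2) (c : ℝ) (hc : 0 < c) :
    IntegrableOn (fun t : ℝ => t ^ (β - 1) * (t + c) ^ (β - 1)) (Set.Ioi 0) := by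
  have hcont : ContinuousOn (fun t : ℝ => t ^ (β - 1) * (t + c) ^ (β - 1)) (Set.Ioi 0) := by
    apply ContinuousOn.mul
    · exact continuousOn_id.rpow_const (fun x hx => Or.inl (ne_of_gt hx))
    · exact (continuousOn_id.add continuousOn_const).rpow_const
        (fun x hx => Or.inl (by simp only [Pi.add_apply, id]; intro h; simp only [Set.mem_Ioi] at hx; linarith))
  have h1 : IntegrableOn (fun t : ℝ => t ^ (β - 1) * (t + c) ^ (β - 1)) (Set.Ioc 0 1) := by
    have hint : IntegrableOn (fun t : ℝ => c ^ (β - 1) * t ^ (β - 1)) (Set.Ioc 0 1) := by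
      apply Integrable.const_mul
      rw [← IntegrableOn, ← intervalIntegrable_iff_integrableOn_Ioc_of_le zero_le_one]
      exact intervalIntegral.intervalIntegrable_rpow' (by linarith)
    apply Integrable.mono' hint
      ((hcont.mono Set.Ioc_subset_Ioi_self).aestronglyMeasurable measurableSet_Ioc)
    filter_upwards [ae_restrict_mem measurableSet_Ioc] with t ht
    have ht0 : 0 < t := ht.1
    rw [Real.norm_eq_abs, abs_of_nonneg (by positivity), mul_comm (c ^ (β - 1))]
    have : (t + c) ^ (β - 1) ≤ c ^ (β - 1) :=
      Real.rpow_le_rpow_of_nonpos hc (by linarith) (by linarith)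
    exact mul_le_mul_of_nonneg_left this (Real.rpow_nonneg ht0.le _)
  have h2 : IntegrableOn (fun t : ℝ => t ^ (β - 1) * (t + c) ^ (β - 1)) (Set.Ioi 1) := by
    have hint : IntegrableOn (fun t : ℝ => t ^ (2 * β - 2)) (Set.Ioi 1) :=
      integrableOn_Ioi_rpow_of_lt (by linarith) one_pos
    apply Integrable.mono' hint
      ((hcont.mono (fun x (hx : (1:ℝ) < x) => lt_trans one_pos hx)).aestronglyMeasurable
        measurableSet_Ioi)
    filter_upwards [ae_restrict_mem measurableSet_Ioi] with t ht
    have ht1 : (1 : ℝ) < t := ht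
    rw [Real.norm_eq_abs, abs_of_nonneg (by positivity)]
    have h3 : (t + c) ^ (β - 1) ≤ t ^ (β - 1) :=
      Real.rpow_le_rpow_of_nonpos (by linarith) (by linarith) (by linarith)
    calc t ^ (β - 1) * (t + c) ^ (β - 1) ≤ t ^ (β - 1) * t ^ (β - 1) :=
          mul_le_mul_of_nonneg_left h3 (Real.rpow_nonneg (by linarith) _)
      _ = t ^ (2 * β - 2) := by
          rw [← Real.rpow_add (by linarith)]; ring_nf
  exact (h1.union h2).mono_set (fun x hx => by
    rcases le_or_gt x 1 with h | h
    · exact Or.inl ⟨hx, h⟩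
    · exact Or.inr h)

lemma auxPos3 (β : ℝ) (hβ0 : 0 < β) (hβ1 : β < 1 / 2) (u : ℝ) (hu : 0 < u) :
    (∫ s : ℝ, Set.indicator {s : ℝ | 0 < s ∧ s < 1 ∧ 0 < s + u ∧ s + u < 1}
        (fun s => s ^ (β - 1) * (s + u) ^ (β - 1)) s)
      ≤ u ^ (2 * β - 1) *
          ∫ t in Set.Ioi (0 : ℝ), t ^ (β - 1) * (t + 1) ^ (β - 1) := by
  set g : ℝ → ℝ := fun s => s ^ (β - 1) * (s + u) ^ (β - 1) with hg
  have hgi : IntegrableOn g (Set.Ioi 0) := auxInt3 β hβ0 hβ1 u hu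
  have step1 : (∫ s : ℝ, Set.indicator {s : ℝ | 0 < s ∧ s < 1 ∧ 0 < s + u ∧ s + u < 1} g s)
      ≤ ∫ s in Set.Ioi (0 : ℝ), g s := by
    rw [← integral_indicator measurableSet_Ioi]
    apply integral_mono_of_nonneg
    · filter_upwards with s
      apply Set.indicator_nonneg
      intro t ht
      exact mul_nonneg (Real.rpow_nonneg ht.1.le _) (Real.rpow_nonneg ht.2.2.1.le _)
    · rw [integrable_indicator_iff measurableSet_Ioi]; exact hgi
    · filter_upwards with s
      by_cases hs : s ∈ {s : ℝ | 0 < s ∧ s < 1 ∧ 0 < s + u ∧ s + u < 1}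
      · rw [Set.indicator_of_mem hs, Set.indicator_of_mem (show s ∈ Set.Ioi 0 from hs.1)]
      · rw [Set.indicator_of_notMem hs]
        apply Set.indicator_nonneg
        intro t ht
        have ht0 : (0 : ℝ) < t := ht
        exact mul_nonneg (Real.rpow_nonneg ht0.le _) (Real.rpow_nonneg (by positivity) _)
  have h1 : (∫ x in Set.Ioi (0 : ℝ), g (u * x)) = u⁻¹ * ∫ x in Set.Ioi (0 : ℝ), g x := by
    have := integral_comp_mul_left_Ioi g 0 hu
    simpa [mul_zero] using this
  have h2 : (∫ x in Set.Ioi (0 : ℝ), g (u * x))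
      = u ^ (2 * β - 2) * ∫ t in Set.Ioi (0 : ℝ), t ^ (β - 1) * (t + 1) ^ (β - 1) := by
    rw [← integral_const_mul]
    apply setIntegral_congr_fun measurableSet_Ioi
    intro x hx
    have hx0 : (0 : ℝ) < x := hx
    have e : u * x + u = u * (x + 1) := by ring
    simp only [hg]
    rw [e, Real.mul_rpow hu.le hx0.le, Real.mul_rpow hu.le (by linarith),
      show (2 * β - 2 : ℝ) = (β - 1) + (β - 1) by ring, Real.rpow_add hu]
    ring
  have step2 : (∫ s in Set.Ioi (0 : ℝ), g s)
      = u ^ (2 * β - 1) * ∫ t in Set.Ioi (0 : ℝ), t ^ (β - 1) * (t + 1) ^ (β - 1) := by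
    have h3 : (∫ x in Set.Ioi (0 : ℝ), g x) = u * ∫ x in Set.Ioi (0 : ℝ), g (u * x) := by
      rw [h1]; field_simp
    rw [h3, h2, ← mul_assoc,
      show u * u ^ (2 * β - 2) = u ^ (2 * β - 1) by
        nth_rewrite 1 [← Real.rpow_one u]
        rw [← Real.rpow_add hu]; ring_nf]
  linarith [step1, step2.le, step2.ge]

/-- For `0 < β < 1/2` and `0 < |u| < 1`,
`∫_ℝ s^{β-1}(s+u)^{β-1} 1_{0<s<1, 0<s+u<1} ds ≤ |u|^{2β-1} ∫₀^∞ t^{β-1}(t+1)^{β-1} dt`,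
and the latter integral is finite. -/
theorem stmt_3 (β : ℝ) (hβ0 : 0 < β) (hβ1 : β < 1 / 2) :
    IntegrableOn (fun t : ℝ => t ^ (β - 1) * (t + 1) ^ (β - 1)) (Set.Ioi 0) ∧
    ∀ u : ℝ, 0 < |u| → |u| < 1 →
      (∫ s : ℝ, Set.indicator {s : ℝ | 0 < s ∧ s < 1 ∧ 0 < s + u ∧ s + u < 1}
          (fun s => s ^ (β - 1) * (s + u) ^ (β - 1)) s)
        ≤ |u| ^ (2 * β - 1) *
            ∫ t in Set.Ioi (0 : ℝ), t ^ (β - 1) * (t + 1) ^ (β - 1) := by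
  refine ⟨auxInt3 β hβ0 hβ1 1 one_pos, fun u hu0 hu1 => ?_⟩
  have hune : u ≠ 0 := fun h => by simp [h] at hu0
  rcases hune.lt_or_gt with hneg | hpos
  · set v : ℝ := -u with hv
    have hvpos : 0 < v := by simp [hv]; linarith
    have key : (∫ s : ℝ, Set.indicator {s : ℝ | 0 < s ∧ s < 1 ∧ 0 < s + u ∧ s + u < 1}
          (fun s => s ^ (β - 1) * (s + u) ^ (β - 1)) s)
        = ∫ s : ℝ, Set.indicator {s : ℝ | 0 < s ∧ s < 1 ∧ 0 < s + v ∧ s + v < 1}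
          (fun s => s ^ (β - 1) * (s + v) ^ (β - 1)) s := by
      rw [← integral_sub_right_eq_self
        (Set.indicator {s : ℝ | 0 < s ∧ s < 1 ∧ 0 < s + u ∧ s + u < 1}
          (fun s => s ^ (β - 1) * (s + u) ^ (β - 1))) u]
      apply integral_congr_ae
      filter_upwards with x
      have e1 : x - u = x + v := by rw [hv]; ring
      have e2 : x - u + u = x := by ring
      have e3 : x + v + u = x := by rw [hv]; ring
      simp only [Set.indicator_apply, Set.mem_setOf_eq, e1, e2, e3]
      by_cases h : 0 < x ∧ x < 1 ∧ 0 < x + v ∧ x + v < 1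
      · rw [if_pos ⟨h.2.2.1, h.2.2.2, h.1, h.2.1⟩, if_pos h, mul_comm]
      · rw [if_neg (fun hc => h ⟨hc.2.2.1, hc.2.2.2, hc.1, hc.2.1⟩), if_neg h]
    rw [key, abs_of_neg hneg, ← hv]
    exact auxPos3 β hβ0 hβ1 v hvpos
  · rw [abs_of_pos hpos]
    exact auxPos3 β hβ0 hβ1 u hpos
end
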